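/- arXiv:1104.2852 — 2 statements merged into one kernel-verified Lean document; each statement's English description precedes it below -/
import Mathlib

section
/- Suppose β lies in Q, the span of the d largest right singular vectors of X, and fix α > 0. Then for any a > √α, the SVD-targeted estimate β̃_{a,√α} (penalty L = a(I−P_Q)+√α P_Q) has strictly smaller MSE than the ridge estimate β̃_{√α,√α}, provided at least one index outside Q has σ_k > 0 or there is positive variance contribution from outside-Q terms. -/
open Matrix

/-- Proposition 1: if β ∈ Q (the span of the d dominant right singular
vectors, so v_k'β = 0 outside Q), σ² > 0, the outside-Q index set is nonempty
with σ_k > 0, and a > √α, then MSE(β̃_{a,√α}) < MSE(β̃_{√α,√α}) = MSE(ridge),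
where the MSE is given by the four-term formula \eqref{eq:MSE_beta_abV}. -/
theorem stmt_13 (n p : ℕ)
    (V : Matrix (Fin p) (Fin n) ℝ) (σ : Fin n → ℝ) (hσ : ∀ k, 0 < σ k)
    (Qs : Finset (Fin n)) (hQne : Qsᶜ.Nonempty)
    (β : Fin p → ℝ) (hβQ : ∀ k ∉ Qs, (fun i => V i k) ⬝ᵥ β = 0)
    (σ2 : ℝ) (hσ2 : 0 < σ2)
    (MSE : ℝ → ℝ → ℝ)
    (hMSE : MSE = fun a b =>
      σ2 * (∑ k ∈ Qsᶜ, σ k ^ 2 / (σ k ^ 2 + a ^ 2) ^ 2)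
      + (∑ k ∈ Qsᶜ, (a ^ 2 / (σ k ^ 2 + a ^ 2)) ^ 2 * ((fun i => V i k) ⬝ᵥ β) ^ 2)
      + σ2 * (∑ k ∈ Qs, σ k ^ 2 / (σ k ^ 2 + b ^ 2) ^ 2)
      + ∑ k ∈ Qs, (b ^ 2 / (σ k ^ 2 + b ^ 2)) ^ 2 * ((fun i => V i k) ⬝ᵥ β) ^ 2)
    (α a : ℝ) (hα : 0 < α) (ha : Real.sqrt α < a) :
    MSE a (Real.sqrt α) < MSE (Real.sqrt α) (Real.sqrt α) := by
  subst hMSE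
  simp only
  have h0 : ∀ c : ℝ, ∑ k ∈ Qsᶜ, (c ^ 2 / (σ k ^ 2 + c ^ 2)) ^ 2 * ((fun i => V i k) ⬝ᵥ β) ^ 2 = 0 := by
    intro c
    refine Finset.sum_eq_zero fun k hk => ?_
    rw [hβQ k (Finset.mem_compl.mp hk)]; ring
  rw [h0, h0]
  have hsq : Real.sqrt α ^ 2 = α := Real.sq_sqrt hα.le
  have ha2 : α < a ^ 2 := by
    have h0a : 0 < a := lt_of_le_of_lt (Real.sqrt_nonneg α) ha
    calc α = Real.sqrt α ^ 2 := hsq.symm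
    _ < a ^ 2 := by
      apply pow_lt_pow_left₀ ha (Real.sqrt_nonneg α)
      norm_num
  have key : ∑ k ∈ Qsᶜ, σ k ^ 2 / (σ k ^ 2 + a ^ 2) ^ 2
      < ∑ k ∈ Qsᶜ, σ k ^ 2 / (σ k ^ 2 + Real.sqrt α ^ 2) ^ 2 := by
    refine Finset.sum_lt_sum_of_nonempty hQne fun k _ => ?_
    rw [hsq]
    have hσk := hσ k
    have hpos : 0 < σ k ^ 2 + α := by positivity
    apply div_lt_div_of_pos_left (by positivity) (by positivity)
    apply pow_lt_pow_left₀ (by linarith) hpos.le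
    norm_num
  have := mul_lt_mul_of_pos_left key hσ2
  linarith
end

section
/- For each k, σ² Σ 1/σ_k² ≥ σ² σ_k²/(σ_k²+b²)² + (b²/(σ_k²+b²))² (v_k'β)² holds term-by-term whenever σ²(1/σ_k² + 2/b²) ≥ (v_k'β)², for σ_k, b > 0. More precisely: 1/σ_k² − σ_k²/(σ_k²+b²)² = (2σ_k²b² + b⁴)/(σ_k²(σ_k²+b²)²), and (2σ_k²b²+b⁴)/(σ_k²(σ_k²+b²)²) · σ² > (b²/(σ_k²+b²))²(v_k'β)² whenever σ²(1/σ_k² + 2/b²) > (v_k'β)². -/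
/-!
Both sides of the inequality carry the shrinkage factor `(b² / (s² + b²))²`: the variance gap
`1/s² - s²/(s² + b²)²` factors as `(b² / (s² + b²))² * (1/s² + 2/b²)`, so after cancelling that
positive factor the claim is exactly the hypothesis `c² < v (1/s² + 2/b²)`.
-/

section Field

variable {K : Type*} [Field K] {s b : K}

theorem one_div_sq_sub_sq_div_sq_add_sq (hs : s ≠ 0) (hsb : s ^ 2 + b ^ 2 ≠ 0) :
    1 / s ^ 2 - s ^ 2 / (s ^ 2 + b ^ 2) ^ 2
      = (2 * s ^ 2 * b ^ 2 + b ^ 4) / (s ^ 2 * (s ^ 2 + b ^ 2) ^ 2) := by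
  field_simp
  ring

theorem div_eq_shrinkage_sq_mul (hs : s ≠ 0) (hb : b ≠ 0) (hsb : s ^ 2 + b ^ 2 ≠ 0) :
    (2 * s ^ 2 * b ^ 2 + b ^ 4) / (s ^ 2 * (s ^ 2 + b ^ 2) ^ 2)
      = (b ^ 2 / (s ^ 2 + b ^ 2)) ^ 2 * (1 / s ^ 2 + 2 / b ^ 2) := by
  field_simp
  ring

end Field

theorem stmt_16_general (s b v c : ℝ) (hs : 0 < s) (hb : 0 < b) :
    (1 / s ^ 2 - s ^ 2 / (s ^ 2 + b ^ 2) ^ 2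
        = (2 * s ^ 2 * b ^ 2 + b ^ 4) / (s ^ 2 * (s ^ 2 + b ^ 2) ^ 2)) ∧
    (v * (1 / s ^ 2 + 2 / b ^ 2) > c ^ 2 →
      (2 * s ^ 2 * b ^ 2 + b ^ 4) / (s ^ 2 * (s ^ 2 + b ^ 2) ^ 2) * v
        > (b ^ 2 / (s ^ 2 + b ^ 2)) ^ 2 * c ^ 2) := by
  have hsb : s ^ 2 + b ^ 2 ≠ 0 := by positivity
  refine ⟨one_div_sq_sub_sq_div_sq_add_sq hs.ne' hsb, fun h => ?_⟩
  rw [div_eq_shrinkage_sq_mul hs.ne' hb.ne' hsb, mul_assoc, mul_comm _ v]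
  exact mul_lt_mul_of_pos_left h (by positivity)

/-- The key scalar inequality underlying Proposition 2:
for σ_k, b > 0 and σ² ≥ 0, c = v_k'β, we have
1/σ_k² − σ_k²/(σ_k²+b²)² = (2σ_k²b² + b⁴)/(σ_k²(σ_k²+b²)²), and
(2σ_k²b²+b⁴)/(σ_k²(σ_k²+b²)²)·σ² > (b²/(σ_k²+b²))²·c²
whenever σ²(1/σ_k² + 2/b²) > c². -/
theorem stmt_16 (s b v c : ℝ) (hs : 0 < s) (hb : 0 < b) (hv : 0 ≤ v) :
    (1 / s ^ 2 - s ^ 2 / (s ^ 2 + b ^ 2) ^ 2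
        = (2 * s ^ 2 * b ^ 2 + b ^ 4) / (s ^ 2 * (s ^ 2 + b ^ 2) ^ 2)) ∧
    (v * (1 / s ^ 2 + 2 / b ^ 2) > c ^ 2 →
      (2 * s ^ 2 * b ^ 2 + b ^ 4) / (s ^ 2 * (s ^ 2 + b ^ 2) ^ 2) * v
        > (b ^ 2 / (s ^ 2 + b ^ 2)) ^ 2 * c ^ 2) :=
  stmt_16_general s b v c hs hb
end
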